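/- arXiv:2009.13425 — 2 statements merged into one kernel-verified Lean document; each statement's English description precedes it below -/
import Mathlib

section
/- The Hermite polynomial H_n is the specialization of the n-th ordinary Bell polynomial: H_n(x) = n! · 2^n · B_n(x, −1/4, 0, ..., 0). -/
/-!
Mathlib's `Polynomial.hermite` is the probabilists' `He_n`, tied to the Gaussian `exp (-y² / 2)`;
rescaling `y = √2 x` in the Rodrigues formula gives `H_n(x) = √2ⁿ He_n(√2 x)`. Both sides of the
identity then expand into the same finite sum `n! Σ_j (-1)ʲ (2x)ⁿ⁻²ʲ / (j! (n - 2j)!)`: the Hermite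
side through the explicit coefficients of `He_n`, the Bell side through the binomial expansion
of `(t₁ z + t₂ z²)ᵐ`, whose `zⁿ`-coefficient is `C(m, n - m) t₁²ᵐ⁻ⁿ t₂ⁿ⁻ᵐ`.
-/

open MvPolynomial

/-- The formal power series `Σ_{k≥1} t_k z^k`, with `t_k` the variable `X k`. -/
noncomputable def bellSeries : PowerSeries (MvPolynomial ℕ ℚ) :=
  PowerSeries.mk fun j => if j = 0 then 0 else MvPolynomial.X j

/-- The ordinary Bell polynomial `B_k`: the coefficient of `z^k` in
`exp(Σ_{j≥1} t_j z^j)`. -/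
noncomputable def bellPoly (k : ℕ) : MvPolynomial ℕ ℚ :=
  ∑ n ∈ Finset.range (k + 1),
    ((Nat.factorial n : ℕ) : ℚ)⁻¹ • PowerSeries.coeff k (bellSeries ^ n)

/-- The physicists' Hermite polynomial via the Rodrigues formula. -/
noncomputable def hermiteP (n : ℕ) (x : ℝ) : ℝ :=
  (-1) ^ n * Real.exp (x ^ 2) * iteratedDeriv n (fun y => Real.exp (-y ^ 2)) x

open scoped Nat

theorem Nat.two_pow_mul_factorial_mul_doubleFactorial (j : ℕ) :
    2 ^ j * j ! * (2 * j - 1)‼ = (2 * j)! := by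
  rcases j with _ | j
  · rfl
  · rw [← Nat.doubleFactorial_two_mul, show 2 * (j + 1) = 2 * j + 1 + 1 by ring,
      Nat.factorial_eq_mul_doubleFactorial, Nat.add_sub_cancel]

theorem Finset.sum_range_succ_eq_sum_range_sub_two_mul {M : Type*} [AddCommMonoid M] (n : ℕ)
    (g : ℕ → M) (hg : ∀ k, Odd (n + k) → g k = 0) :
    ∑ k ∈ range (n + 1), g k = ∑ j ∈ range (n / 2 + 1), g (n - 2 * j) := by
  rw [← Finset.sum_image (g := fun j => n - 2 * j) fun i hi j hj hij => by
    simp only [coe_range, Set.mem_Iio] at hi hj hij; omega]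
  refine (Finset.sum_subset (fun k hk => ?_) fun k hk hk' => hg k ?_).symm
  · obtain ⟨j, -, rfl⟩ := Finset.mem_image.mp hk
    simp only [mem_range]; omega
  · simp only [mem_range, mem_image, not_exists, not_and] at hk hk'
    rw [Nat.odd_iff]
    by_contra h
    exact hk' ((n - k) / 2) (by omega) (by omega)

namespace Polynomial

theorem coeff_hermite_two_mul_add {K : Type*} [Field K] [CharZero K] (j k : ℕ) :
    ((hermite (2 * j + k)).coeff k : K) = (-1) ^ j * (2 * j + k)! / (2 ^ j * j ! * k !) := by
  rw [coeff_hermite_explicit, ← Nat.add_choose_mul_factorial_mul_factorial (2 * j) k,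
    ← Nat.two_pow_mul_factorial_mul_doubleFactorial j]
  push_cast
  field_simp [Nat.factorial_ne_zero]

theorem aeval_hermite_eq_sum {K : Type*} [Field K] [CharZero K] (n : ℕ) (y : K) :
    aeval y (hermite n) = ∑ j ∈ Finset.range (n / 2 + 1),
      (-1) ^ j * n ! / (2 ^ j * j ! * (n - 2 * j)!) * y ^ (n - 2 * j) := by
  rw [aeval_eq_sum_range, natDegree_hermite, Finset.sum_range_succ_eq_sum_range_sub_two_mul n _
    fun k hk => by rw [coeff_hermite_of_odd_add hk, zero_smul]]
  refine Finset.sum_congr rfl fun j hj => ?_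
  obtain ⟨k, rfl⟩ : ∃ k, n = 2 * j + k := ⟨n - 2 * j, by simp at hj; omega⟩
  rw [Nat.add_sub_cancel_left, zsmul_eq_mul, coeff_hermite_two_mul_add]

theorem coeff_C_mul_X_add_C_mul_X_sq_pow {R : Type*} [CommSemiring R] (a b : R) (m l : ℕ) :
    ((C a * X + C b * X ^ 2) ^ m).coeff (m + l) = m.choose l * a ^ (m - l) * b ^ l := by
  have hfactor : C a * X + C b * X ^ 2 = (C b * X + C a) * X := by ring
  rw [hfactor, mul_pow, add_comm m, coeff_mul_X_pow, add_pow, finsetSum_coeff]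
  have hterm : ∀ i, (C b * X) ^ i * C a ^ (m - i) * (m.choose i : R[X]) =
      C (m.choose i * a ^ (m - i) * b ^ i) * X ^ i := fun i => by
    rw [← C_eq_natCast]; simp only [C_mul, C_pow]; ring
  simp only [hterm, coeff_C_mul_X_pow, Finset.sum_ite_eq, Finset.mem_range]
  split_ifs with hl
  · rfl
  · simp [Nat.choose_eq_zero_of_lt (by omega : m < l)]

end Polynomial

theorem map_aeval_bellSeries {A : Type*} [CommSemiring A] [Algebra ℚ A] (a b : A) :
    PowerSeries.map (aeval (R := ℚ) (fun j => if j = 1 then a else if j = 2 then b else 0) :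
      MvPolynomial ℕ ℚ →+* A) bellSeries =
      ((Polynomial.C a * Polynomial.X + Polynomial.C b * Polynomial.X ^ 2 : Polynomial A) :
        PowerSeries A) := by
  ext (_ | _ | _ | j) <;> simp [bellSeries]

theorem aeval_bellPoly_eq_sum {K : Type*} [Field K] [CharZero K] (a b : K) (n : ℕ) :
    aeval (fun j => if j = 1 then a else if j = 2 then b else 0) (bellPoly n) =
      ∑ j ∈ Finset.range (n / 2 + 1), a ^ (n - 2 * j) * b ^ j / ((n - 2 * j)! * j !) := by
  have hcoeff : ∀ m, aeval (fun j => if j = 1 then a else if j = 2 then b else 0)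
      (PowerSeries.coeff n (bellSeries ^ m)) =
        ((Polynomial.C a * Polynomial.X + Polynomial.C b * Polynomial.X ^ 2) ^ m).coeff n :=
    fun m => by
    rw [← AlgHom.coe_toRingHom, ← PowerSeries.coeff_map, map_pow, map_aeval_bellSeries,
      ← Polynomial.coe_pow, Polynomial.coeff_coe]
  simp only [bellPoly, map_sum, map_smul, hcoeff, Rat.smul_def, Rat.cast_inv, Rat.cast_natCast]
  -- reindex by `j = n - m`, the number of factors `t₂ z²` in a monomial of `(t₁ z + t₂ z²) ^ m`
  rw [← Finset.sum_range_reflect, Nat.add_sub_cancel]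
  have hvanish : ∀ j ∈ Finset.range (n + 1), j ∉ Finset.range (n / 2 + 1) →
      ((n - j)! : K)⁻¹ *
        ((Polynomial.C a * Polynomial.X + Polynomial.C b * Polynomial.X ^ 2) ^ (n - j)).coeff n
        = 0 := fun j hj hj' => by
    simp only [Finset.mem_range] at hj hj'
    have hzero := Polynomial.coeff_C_mul_X_add_C_mul_X_sq_pow a b (n - j) j
    rw [Nat.sub_add_cancel (by omega), Nat.choose_eq_zero_of_lt (by omega)] at hzero
    simp [hzero]
  rw [← Finset.sum_subset (Finset.range_subset_range.2 (by omega : n / 2 + 1 ≤ n + 1)) hvanish]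
  refine Finset.sum_congr rfl fun j hj => ?_
  obtain ⟨k, rfl⟩ : ∃ k, n = j + k + j := ⟨n - 2 * j, by simp at hj; omega⟩
  rw [show j + k + j - j = j + k by omega, show j + k + j - 2 * j = k by omega,
    Polynomial.coeff_C_mul_X_add_C_mul_X_sq_pow, Nat.add_sub_cancel_left, Nat.cast_add_choose]
  field_simp [Nat.factorial_ne_zero]

theorem hermiteP_eq_sqrt_two_pow_mul_aeval_hermite (n : ℕ) (x : ℝ) :
    hermiteP n x = √2 ^ n * Polynomial.aeval (√2 * x) (Polynomial.hermite n) := by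
  have hgauss : ∀ y : ℝ, Real.exp (-y ^ 2) = Real.exp (-((√2 * y) ^ 2 / 2)) := fun y => by
    rw [mul_pow, Real.sq_sqrt zero_le_two]; ring_nf
  have hsmooth : ContDiff ℝ n fun y : ℝ => Real.exp (-(y ^ 2 / 2)) := by fun_prop
  rw [hermiteP, funext hgauss, iteratedDeriv_comp_const_mul hsmooth, iteratedDeriv_eq_iterate]
  dsimp only
  rw [Polynomial.deriv_gaussian_eq_hermite_mul_gaussian, ← hgauss]
  have hsign : (-1 : ℝ) ^ n * (-1) ^ n = 1 := by rw [← mul_pow]; norm_num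
  have hexp : Real.exp (x ^ 2) * Real.exp (-x ^ 2) = 1 := by
    rw [← Real.exp_add, add_neg_cancel, Real.exp_zero]
  linear_combination (√2 ^ n * Polynomial.aeval (√2 * x) (Polynomial.hermite n)) *
    (Real.exp (x ^ 2) * Real.exp (-x ^ 2) * hsign + hexp)

/-- `H_n(x) = n! · 2^n · B_n(x, −1/4, 0, …)`, i.e. the Hermite polynomial is a
specialization of the `n`-th ordinary Bell polynomial at
`t₁ = x, t₂ = −1/4, t_k = 0 (k ≥ 3)`. -/
theorem hermiteP_eq_bell (n : ℕ) (x : ℝ) :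
    hermiteP n x = (Nat.factorial n : ℝ) * 2 ^ n *
      MvPolynomial.aeval
        (fun j : ℕ => if j = 1 then x else if j = 2 then (-1/4 : ℝ) else 0)
        (bellPoly n) := by
  rw [hermiteP_eq_sqrt_two_pow_mul_aeval_hermite, Polynomial.aeval_hermite_eq_sum,
    aeval_bellPoly_eq_sum, Finset.mul_sum, Finset.mul_sum]
  refine Finset.sum_congr rfl fun j hj => ?_
  obtain ⟨k, rfl⟩ : ∃ k, n = 2 * j + k := ⟨n - 2 * j, by simp at hj; omega⟩
  have hsqrt : √2 ^ (2 * j + k) * √2 ^ k = 2 ^ (j + k) := by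
    rw [← pow_add, show 2 * j + k + k = 2 * (j + k) by ring, pow_mul, Real.sq_sqrt zero_le_two]
  rw [Nat.add_sub_cancel_left, mul_pow]
  have hquarter : (-(1 / 4) : ℝ) ^ j * 2 ^ (2 * j) = (-1) ^ j := by
    rw [pow_mul, ← mul_pow]; norm_num
  field_simp
  linear_combination ((-1) ^ j * x ^ k) * hsqrt - (2 ^ j * 2 ^ k * x ^ k) * hquarter
end

section
/- For a Maya diagram M with associated partition λ of length ℓ and first part λ_1, the threshold q_c = λ_1 + ℓ is a critical degree and every q ≥ q_c is a critical degree, while q_c − 1 is not a critical degree (when λ is nontrivial); here q ∈ ℕ is a critical degree iff M ⊆ M + q. -/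
/-- `M + q = {m + q : m ∈ M}`. -/
def mayaShift (M : Set ℤ) (n : ℤ) : Set ℤ := (fun m => m + n) '' M

/-- The Maya diagram `M^(λ) = {λ_i − i : i ≥ 1}` of a partition (0-indexed:
`f i = λ_{i+1}`). -/
def mayaOfPartition (f : ℕ → ℕ) : Set ℤ :=
  {k : ℤ | ∃ i : ℕ, k = (f i : ℤ) - (i + 1)}

/-- For a Maya diagram `M = M^(λ) + σ` associated with a partition `λ` of
length `ℓ` and first part `λ₁`, the threshold `q_c = λ₁ + ℓ` is a critical
degree, every `q ≥ q_c` is a critical degree, and (when `λ` is nontrivial)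
`q_c − 1` is not a critical degree; here `q` is a critical degree iff
`M ⊆ M + q`. -/
theorem critical_degree_threshold (f : ℕ → ℕ) (hf : Antitone f)
    (ℓ : ℕ) (hℓ : ∀ i, f i ≠ 0 ↔ i < ℓ)
    (σ : ℤ) (M : Set ℤ) (hM : M = mayaShift (mayaOfPartition f) σ) :
    (∀ q : ℕ, f 0 + ℓ ≤ q → M ⊆ mayaShift M q) ∧
    (ℓ ≠ 0 → ¬ M ⊆ mayaShift M ((f 0 + ℓ - 1 : ℕ) : ℤ)) := by
  subst hM
  have hfz : ∀ j, ℓ ≤ j → f j = 0 := by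
    intro j hj
    by_contra h
    have := (hℓ j).mp h
    omega
  have hf0 : ∀ i, f i ≤ f 0 := fun i => hf (Nat.zero_le i)
  constructor
  · rintro q hq x ⟨m, ⟨i, hi⟩, rfl⟩
    set j := q + i - f i with hjdef
    have hij := hf0 i
    have h1 : f j = 0 := hfz j (by omega)
    have h2 : (j : ℤ) = (q : ℤ) + i - f i := by omega
    refine ⟨(f j : ℤ) - (j + 1) + σ, ⟨(f j : ℤ) - (j + 1), ⟨j, rfl⟩, rfl⟩, ?_⟩
    rw [hi, h1, h2]
    push_cast
    ring
  · intro hl hsub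
    have hf0pos : f 0 ≠ 0 := (hℓ 0).mpr (by omega)
    have hx : ((f 0 : ℤ) - 1 + σ) ∈ mayaShift (mayaOfPartition f) σ :=
      ⟨(f 0 : ℤ) - 1, ⟨0, by push_cast; ring⟩, rfl⟩
    obtain ⟨y, ⟨m, ⟨j, hj⟩, rfl⟩, heq⟩ := hsub hx
    -- heq : m + σ + ↑(f 0 + ℓ - 1) = f 0 - 1 + σ, m = f j - (j+1)
    subst hj
    simp only at heq
    by_cases hjl : j < ℓ
    · have hne : f j ≠ 0 := (hℓ j).mpr hjl
      omega
    · have := hfz j (le_of_not_gt hjl)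
      omega
end
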